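/- Let κ₀ > 0, let c ∈ (−1, −1/2), and let f : (0,∞) → ℝ be continuous with ∫₀^∞ t^{c+1} |f(t)| dt < ∞ and with Mellin transform f̃(s) = ∫₀^∞ r^{s−1} f(r) dr absolutely integrable over the line {Re λ = c} as a function of λ ↦ f̃(λ+2). Define q₁(r) = (1/(2πi)) ∫_{Re λ = c} r^{−λ} f̃(λ+2)/(κ₀ λ (λ+1)) dλ for r > 0. Then q₁ is differentiable on (0,∞) with q₁′(r) = −(1/κ₀) ∫_r^∞ f(t) dt for every r > 0; in particular, if ∫₀^∞ f(t) dt = 0 (and this integral converges), then lim_{r→0⁺} q₁′(r) = 0. -/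

import Mathlib

/-!
With `F s = f̃(s+2) / (s (s+1))`, `q₁ = κ₀⁻¹ 𝓜⁻¹_c F` is an inverse Mellin transform along
`Re s = c`. Differentiating under the integral (`d/dr r^{-s} = -s r^{-s-1}`) gives
`q₁' = -κ₀⁻¹ 𝓜⁻¹_{c+1} [f̃(s+1) / s]`. By Fubini over `{0 < t < u}`, `f̃(s+1) / s` is the Mellin
transform of the tail `G r = ∫_r^∞ f` on `Re s = c + 1 > 0`, so Mellin inversion yields
`q₁' = -G / κ₀`; the limit at `0⁺` is the continuity of `G` at `0`.
-/

open Complex Filter Real MeasureTheory Set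

/-- `q₁(r) = (1/(2πi)) ∫_{Re λ = c} r^{-λ} f̃(λ+2)/(κ₀ λ (λ+1)) dλ`, the contour
integral over the vertical line `{Re λ = c}` (`λ = c + iτ`, `dλ = i dτ`), where
`f̃ = mellin f` is the Mellin transform `f̃(s) = ∫₀^∞ r^{s-1} f(r) dr`. -/
noncomputable def qOne (κ₀ c : ℝ) (f : ℝ → ℝ) (r : ℝ) : ℂ :=
  (1 / (2 * (π : ℂ) * Complex.I)) *
    ∫ τ : ℝ, (r : ℂ) ^ (-((c : ℂ) + (τ : ℂ) * Complex.I)) *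
      mellin (fun t => (f t : ℂ)) ((c : ℂ) + (τ : ℂ) * Complex.I + 2) /
        ((κ₀ : ℂ) * ((c : ℂ) + (τ : ℂ) * Complex.I) *
          ((c : ℂ) + (τ : ℂ) * Complex.I + 1)) * Complex.I

section MellinInv

variable {E : Type*} [NormedAddCommGroup E] [NormedSpace ℂ E]

theorem mellinInv_congr {σ : ℝ} {F F' : ℂ → E} (h : ∀ s : ℂ, s.re = σ → F s = F' s) (x : ℝ) :
    mellinInv σ F x = mellinInv σ F' x := by
  unfold mellinInv
  congr 2 with τ
  rw [h _ (by simp)]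

theorem hasDerivAt_mellinInv {σ : ℝ} {F : ℂ → E} (hF : VerticalIntegrable F σ)
    (hsF : VerticalIntegrable (fun s => s • F s) σ) {x : ℝ} (hx : 0 < x) :
    HasDerivAt (mellinInv σ F) (-mellinInv (σ + 1) (fun s => (s - 1) • F (s - 1)) x) x := by
  set L : ℝ → ℂ := fun τ => σ + τ * I
  have hcpow : ∀ {y : ℝ}, 0 < y → ∀ {w : ℝ → ℂ}, Continuous w →
      Continuous fun τ => (y : ℂ) ^ w τ :=
    fun hy _ hw => hw.const_cpow (Or.inl (ofReal_ne_zero.2 hy.ne'))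
  have hball : Metric.closedBall x (x / 2) ⊆ Ioi 0 := fun y hy => by
    rw [Metric.mem_closedBall, Real.dist_eq, abs_le] at hy
    exact (show (0 : ℝ) < y by linarith [hy.1])
  obtain ⟨C, hC⟩ := (isCompact_closedBall x (x / 2)).exists_bound_of_continuousOn
    ((continuousOn_id.rpow_const fun y hy => Or.inl (ne_of_gt (hball hy))) :
      ContinuousOn (fun y : ℝ => y ^ (-σ - 1)) _)
  have hderiv : ∀ τ, ∀ y ∈ Metric.ball x (x / 2),
      HasDerivAt (fun y : ℝ => (y : ℂ) ^ (-L τ) • F (L τ))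
        ((-L τ * (y : ℂ) ^ (-L τ - 1)) • F (L τ)) y := fun τ y hy =>
    ((hasStrictDerivAt_cpow_const (ofReal_mem_slitPlane.2
      (hball (Metric.ball_subset_closedBall hy)))).hasDerivAt.comp_ofReal).smul_const _
  have hmeas : ∀ y : ℝ, 0 < y →
      AEStronglyMeasurable (fun τ => (y : ℂ) ^ (-L τ) • F (L τ)) volume := fun y hy =>
    (hcpow hy (by fun_prop)).aestronglyMeasurable.smul hF.aestronglyMeasurable
  have key := (hasDerivAt_integral_of_dominated_loc_of_deriv_le
    (F' := fun y τ => (-L τ * (y : ℂ) ^ (-L τ - 1)) • F (L τ))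
    (bound := fun τ => C * ‖L τ • F (L τ)‖) (Metric.ball_mem_nhds x (half_pos hx))
    ((eventually_gt_nhds hx).mono hmeas) ?_ ?_ ?_ (hsF.norm.const_mul C)
    (ae_of_all _ hderiv)).2.const_smul (1 / (2 * π))
  · refine key.congr_deriv ?_
    simp only [mellinInv, ← integral_neg, ← smul_neg]
    congr 2 with τ
    have hLτ : ((σ + 1 : ℝ) : ℂ) + τ * I - 1 = L τ := by push_cast; ring
    rw [hLτ, show -(((σ + 1 : ℝ) : ℂ) + τ * I) = -L τ - 1 by rw [← hLτ]; ring]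
    module
  · refine hF.bdd_smul (x ^ (-σ)) (hcpow hx (by fun_prop)).aestronglyMeasurable
      (ae_of_all _ fun τ => ?_)
    simp [norm_cpow_eq_rpow_re_of_pos hx, L]
  · exact ((show Continuous L by fun_prop).neg.mul
      (hcpow hx (by fun_prop))).aestronglyMeasurable.smul hF.aestronglyMeasurable
  · refine ae_of_all _ fun τ y hy => ?_
    have hy' := Metric.ball_subset_closedBall hy
    have hre : (-L τ - 1).re = -σ - 1 := by simp [L]
    have hyC : y ^ (-σ - 1) ≤ C := (le_abs_self _).trans (hC y hy')
    rw [mul_smul, norm_smul, norm_smul, norm_smul, norm_cpow_eq_rpow_re_of_pos (hball hy'), hre,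
      norm_neg]
    calc ‖L τ‖ * (y ^ (-σ - 1) * ‖F (L τ)‖) = y ^ (-σ - 1) * (‖L τ‖ * ‖F (L τ)‖) := by ring
      _ ≤ C * (‖L τ‖ * ‖F (L τ)‖) := by gcongr

end MellinInv

section TailIntegral

variable {E : Type*} [NormedAddCommGroup E] {g : ℝ → E}

theorem integrableOn_Ioi_of_integrableOn_rpow_mul_norm {σ t : ℝ} (hσ : 0 ≤ σ) (ht : 0 < t)
    (hg : AEStronglyMeasurable g (volume.restrict (Ioi 0)))
    (hint : IntegrableOn (fun u => u ^ σ * ‖g u‖) (Ioi 0)) : IntegrableOn g (Ioi t) := by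
  refine ((hint.mono_set (Ioi_subset_Ioi ht.le)).const_mul (t ^ (-σ))).mono'
    (hg.mono_set (Ioi_subset_Ioi ht.le)) ?_
  filter_upwards [ae_restrict_mem measurableSet_Ioi] with u (hu : t < u)
  calc ‖g u‖ = t ^ (-σ) * (t ^ σ * ‖g u‖) := by
        rw [← mul_assoc, ← rpow_add ht, neg_add_cancel, rpow_zero, one_mul]
    _ ≤ t ^ (-σ) * (u ^ σ * ‖g u‖) := by gcongr

theorem integral_Ioo_zero_ofReal_cpow_sub_one {s : ℂ} (hs : 0 < s.re) {u : ℝ} (hu : 0 ≤ u) :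
    ∫ t in Ioo 0 u, (t : ℂ) ^ (s - 1) = (u : ℂ) ^ s / s := by
  have hs1 : -1 < (s - 1).re := by simpa using hs
  rw [← integral_Ioc_eq_integral_Ioo, ← intervalIntegral.integral_of_le hu,
    integral_cpow (Or.inl hs1), sub_add_cancel, ofReal_zero,
    zero_cpow (fun h => by simp [h] at hs), sub_zero]

theorem integral_Ioo_zero_rpow_sub_one {σ : ℝ} (hσ : 0 < σ) {u : ℝ} (hu : 0 ≤ u) :
    ∫ t in Ioo 0 u, t ^ (σ - 1) = u ^ σ / σ := by
  rw [← integral_Ioc_eq_integral_Ioo, ← intervalIntegral.integral_of_le hu,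
    integral_rpow (Or.inl (by linarith)), sub_add_cancel, zero_rpow hσ.ne', sub_zero]

theorem setIntegral_Ioi_indicator_Iio {F : Type*} [NormedAddCommGroup F] [NormedSpace ℝ F]
    (a b : ℝ) (φ : ℝ → F) : ∫ t in Ioi a, (Iio b).indicator φ t = ∫ t in Ioo a b, φ t := by
  rw [integral_indicator measurableSet_Iio, Measure.restrict_restrict measurableSet_Iio,
    Iio_inter_Ioi]

theorem integrableOn_Ioi_indicator_Iio_iff {F : Type*} [NormedAddCommGroup F] {a b : ℝ}
    {φ : ℝ → F} : IntegrableOn ((Iio b).indicator φ) (Ioi a) ↔ IntegrableOn φ (Ioo a b) := by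
  rw [IntegrableOn, integrable_indicator_iff measurableSet_Iio, IntegrableOn,
    Measure.restrict_restrict measurableSet_Iio, Iio_inter_Ioi]
  rfl

variable [NormedSpace ℂ E]

theorem integrable_indicator_lt_cpow_smul {s : ℂ} (hs : 0 < s.re)
    (hg : AEStronglyMeasurable g (volume.restrict (Ioi 0)))
    (hint : IntegrableOn (fun u => u ^ s.re * ‖g u‖) (Ioi 0)) :
    Integrable ({p : ℝ × ℝ | p.1 < p.2}.indicator fun p => (p.1 : ℂ) ^ (s - 1) • g p.2)
      ((volume.restrict (Ioi 0)).prod (volume.restrict (Ioi 0))) := by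
  set ν := volume.restrict (Ioi (0 : ℝ))
  set H : ℝ × ℝ → E := {p | p.1 < p.2}.indicator fun p => (p.1 : ℂ) ^ (s - 1) • g p.2
  have hslice_u : ∀ t u, H (t, u) = (Iio u).indicator (fun t => (t : ℂ) ^ (s - 1)) t • g u := by
    intro t u; by_cases h : t < u <;> simp [H, h]
  have hmeas : AEStronglyMeasurable H (ν.prod ν) :=
    ((((measurable_ofReal.comp measurable_fst).pow_const (s - 1)).aestronglyMeasurable).smul
      (hg.comp_quasiMeasurePreserving Measure.quasiMeasurePreserving_snd)).indicator
      (measurableSet_lt measurable_fst measurable_snd)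
  have hnorm : ∀ u ∈ Ioi (0 : ℝ), ∫ t, ‖H (t, u)‖ ∂ν = (u ^ s.re * ‖g u‖) / s.re := by
    intro u (hu : 0 < u)
    have hcpow : ∀ t ∈ Ioo 0 u, ‖(t : ℂ) ^ (s - 1)‖ = t ^ (s.re - 1) := fun t ht => by
      simp [norm_cpow_eq_rpow_re_of_pos ht.1]
    simp_rw [hslice_u, norm_smul, norm_indicator_eq_indicator_norm, integral_mul_const, ν,
      setIntegral_Ioi_indicator_Iio, setIntegral_congr_fun measurableSet_Ioo hcpow,
      integral_Ioo_zero_rpow_sub_one hs hu.le]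
    ring
  refine (integrable_prod_iff' hmeas).2 ⟨?_, (hint.div_const s.re).congr ?_⟩
  · filter_upwards [ae_restrict_mem measurableSet_Ioi] with u (hu : 0 < u)
    simp_rw [hslice_u]
    have hs1 : -1 < (s - 1).re := by simpa using hs
    refine (show Integrable _ ν from integrableOn_Ioi_indicator_Iio_iff.2 ?_).smul_const _
    exact (intervalIntegrable_iff_integrableOn_Ioo_of_le hu.le).1
      (intervalIntegral.intervalIntegrable_cpow' hs1)
  · exact EventuallyEq.symm ((ae_restrict_mem measurableSet_Ioi).mono hnorm)

theorem hasMellin_integral_Ioi [CompleteSpace E] {s : ℂ} (hs : 0 < s.re)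
    (hg : AEStronglyMeasurable g (volume.restrict (Ioi 0)))
    (hint : IntegrableOn (fun u => u ^ s.re * ‖g u‖) (Ioi 0)) :
    HasMellin (fun t => ∫ u in Ioi t, g u) s (s⁻¹ • mellin g (s + 1)) := by
  set ν := volume.restrict (Ioi (0 : ℝ))
  set H : ℝ × ℝ → E := {p | p.1 < p.2}.indicator fun p => (p.1 : ℂ) ^ (s - 1) • g p.2
  have hH : Integrable H (ν.prod ν) := integrable_indicator_lt_cpow_smul hs hg hint
  have hslice_t : ∀ t u, H (t, u) = (t : ℂ) ^ (s - 1) • (Ioi t).indicator g u := by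
    intro t u; by_cases h : t < u <;> simp [H, h]
  have hslice_u : ∀ t u, H (t, u) = (Iio u).indicator (fun t => (t : ℂ) ^ (s - 1)) t • g u := by
    intro t u; by_cases h : t < u <;> simp [H, h]
  have hinner_t :
      ∀ t ∈ Ioi (0 : ℝ), ∫ u, H (t, u) ∂ν = (t : ℂ) ^ (s - 1) • ∫ u in Ioi t, g u := by
    intro t (ht : 0 < t)
    simp_rw [hslice_t, integral_smul, integral_indicator measurableSet_Ioi, ν,
      Measure.restrict_restrict measurableSet_Ioi, inter_eq_left.mpr (Ioi_subset_Ioi ht.le)]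
  have hinner_u : ∀ u ∈ Ioi (0 : ℝ), ∫ t, H (t, u) ∂ν = s⁻¹ • (u : ℂ) ^ (s + 1 - 1) • g u := by
    intro u (hu : 0 < u)
    simp_rw [hslice_u, integral_smul_const, ν, setIntegral_Ioi_indicator_Iio,
      integral_Ioo_zero_ofReal_cpow_sub_one hs hu.le, add_sub_cancel_right, smul_smul,
      div_eq_inv_mul]
  refine ⟨hH.integral_prod_left.congr ?_, ?_⟩
  · exact (ae_restrict_mem measurableSet_Ioi).mono hinner_t
  · rw [mellin, mellin, ← integral_smul, ← setIntegral_congr_fun measurableSet_Ioi hinner_t,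
      ← setIntegral_congr_fun measurableSet_Ioi hinner_u]
    exact integral_integral_swap (f := fun t u => H (t, u)) hH

theorem mellinInv_inv_smul_mellin_add_one [CompleteSpace E] {σ : ℝ} (hσ : 0 < σ)
    (hg : AEStronglyMeasurable g (volume.restrict (Ioi 0)))
    (hint : IntegrableOn (fun u => u ^ σ * ‖g u‖) (Ioi 0))
    (hvert : VerticalIntegrable (fun s => s⁻¹ • mellin g (s + 1)) σ) {x : ℝ} (hx : 0 < x) :
    mellinInv σ (fun s => s⁻¹ • mellin g (s + 1)) x = ∫ u in Ioi x, g u := by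
  have hG : ∀ s : ℂ, s.re = σ →
      HasMellin (fun t => ∫ u in Ioi t, g u) s (s⁻¹ • mellin g (s + 1)) :=
    fun s hs => hasMellin_integral_Ioi (hs ▸ hσ) hg (hs ▸ hint)
  have hcont : ContinuousAt (fun t => ∫ u in Ioi t, g u) x :=
    (integrableOn_Ioi_of_integrableOn_rpow_mul_norm hσ.le (half_pos hx) hg
      hint).continuousOn_Ici_primitive_Ioi.continuousAt (Ici_mem_nhds (half_lt_self hx))
  rw [mellinInv_congr (fun s hs => ((hG s hs).2).symm)]
  exact mellinInv_mellin_eq σ _ hx (by simpa using (hG σ (by simp)).1)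
    (Integrable.congr hvert (ae_of_all _ fun τ => ((hG _ (by simp)).2).symm)) hcont

end TailIntegral

theorem abs_le_norm_ofReal_add_mul_I (σ τ : ℝ) : |σ| ≤ ‖(σ : ℂ) + τ * I‖ := by
  simpa using abs_re_le_norm ((σ : ℂ) + τ * I)

theorem ofReal_add_mul_I_ne_zero {σ : ℝ} (hσ : σ ≠ 0) (τ : ℝ) : (σ : ℂ) + τ * I ≠ 0 := fun h =>
  hσ (by simpa using congrArg re h)

theorem MeasureTheory.Integrable.div_ofReal_add_mul_I {g : ℝ → ℂ} (hg : Integrable g) {σ : ℝ}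
    (hσ : σ ≠ 0) : Integrable fun τ : ℝ => g τ / (σ + τ * I) := by
  simpa only [div_eq_inv_mul, Pi.inv_apply] using hg.bdd_mul (c := |σ|⁻¹)
    ((show Continuous fun τ : ℝ => (σ : ℂ) + τ * I by fun_prop).inv₀
      (ofReal_add_mul_I_ne_zero hσ)).aestronglyMeasurable
    (ae_of_all _ fun τ => by
      rw [Pi.inv_apply, norm_inv]; exact inv_anti₀ (abs_pos.2 hσ) (abs_le_norm_ofReal_add_mul_I σ τ))

theorem qOne_eq_mellinInv (κ₀ c : ℝ) (f : ℝ → ℝ) :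
    qOne κ₀ c f = fun r =>
      mellinInv c (fun s => mellin (fun t => (f t : ℂ)) (s + 2) / (s * (s + 1))) r / κ₀ := by
  funext r
  simp only [qOne, mellinInv, smul_eq_mul, real_smul]
  have hintegrand : ∀ τ : ℝ, (r : ℂ) ^ (-((c : ℂ) + τ * I)) *
        mellin (fun t => (f t : ℂ)) ((c : ℂ) + τ * I + 2) /
        ((κ₀ : ℂ) * ((c : ℂ) + τ * I) * ((c : ℂ) + τ * I + 1)) * I =
      (r : ℂ) ^ (-((c : ℂ) + τ * I)) * (mellin (fun t => (f t : ℂ)) ((c : ℂ) + τ * I + 2) /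
        (((c : ℂ) + τ * I) * ((c : ℂ) + τ * I + 1))) * (I / κ₀) := fun τ => by
    rw [mul_assoc (κ₀ : ℂ), div_mul_eq_div_div_swap]; ring
  simp_rw [hintegrand, integral_mul_const]
  push_cast
  field_simp

theorem hasDerivAt_qOne {κ₀ c : ℝ} (hc : -1 < c) (hc₀ : c ≠ 0) {f : ℝ → ℝ}
    (hf : ContinuousOn f (Ioi 0))
    (hint : IntegrableOn (fun t : ℝ => t ^ (c + 1) * |f t|) (Ioi 0))
    (hmel : Integrable (fun τ : ℝ =>
      mellin (fun t => (f t : ℂ)) ((c : ℂ) + (τ : ℂ) * Complex.I + 2)))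
    {r : ℝ} (hr : 0 < r) :
    HasDerivAt (qOne κ₀ c f) ((-(1 / κ₀) * ∫ t in Ioi r, f t : ℝ) : ℂ) r := by
  set M := mellin (fun t => (f t : ℂ))
  have hc₁ : c + 1 ≠ 0 := by linarith
  have hg : AEStronglyMeasurable (fun t => (f t : ℂ)) (volume.restrict (Ioi 0)) :=
    (continuous_ofReal.comp_continuousOn hf).aestronglyMeasurable measurableSet_Ioi
  have hF : VerticalIntegrable (fun s => M (s + 2) / (s * (s + 1))) c := by
    refine ((hmel.div_ofReal_add_mul_I hc₀).div_ofReal_add_mul_I hc₁).congr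
      (ae_of_all _ fun τ => ?_)
    dsimp only
    rw [div_div]
    push_cast; ring
  have hsF : VerticalIntegrable (fun s => s • (M (s + 2) / (s * (s + 1)))) c := by
    refine (hmel.div_ofReal_add_mul_I hc₁).congr (ae_of_all _ fun τ => ?_)
    dsimp only
    rw [smul_eq_mul, mul_div_assoc', mul_div_mul_left _ _ (ofReal_add_mul_I_ne_zero hc₀ τ)]
    push_cast; ring
  have hvert : VerticalIntegrable (fun s => s⁻¹ • M (s + 1)) (c + 1) := by
    refine (hmel.div_ofReal_add_mul_I hc₁).congr (ae_of_all _ fun τ => ?_)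
    dsimp only
    rw [smul_eq_mul, inv_mul_eq_div]
    push_cast; ring_nf
  have hshift : mellinInv (c + 1) (fun s => (s - 1) • (M (s - 1 + 2) / ((s - 1) * (s - 1 + 1)))) r
      = mellinInv (c + 1) (fun s => s⁻¹ • M (s + 1)) r := mellinInv_congr (fun s hs => by
    have hs₁ : s - 1 ≠ 0 := fun h => hc₀ (by simpa [hs] using congrArg re h)
    rw [smul_eq_mul, smul_eq_mul, mul_div_assoc', mul_div_mul_left _ _ hs₁]
    ring_nf) r
  rw [qOne_eq_mellinInv]
  refine ((hasDerivAt_mellinInv hF hsF hr).div_const (κ₀ : ℂ)).congr_deriv ?_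
  rw [hshift, mellinInv_inv_smul_mellin_add_one (by linarith) hg (by simpa using hint) hvert hr,
    integral_complex_ofReal]
  push_cast; ring

theorem stmt15_general (κ₀ c : ℝ) (hc : c ∈ Set.Ioo (-1 : ℝ) (-1/2))
    (f : ℝ → ℝ) (hf : ContinuousOn f (Set.Ioi 0))
    (hint : IntegrableOn (fun t : ℝ => t ^ (c + 1) * |f t|) (Set.Ioi 0))
    (hmel : Integrable (fun τ : ℝ =>
      mellin (fun t => (f t : ℂ)) ((c : ℂ) + (τ : ℂ) * Complex.I + 2))) :
    (∀ r : ℝ, 0 < r →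
      HasDerivAt (qOne κ₀ c f) ((-(1/κ₀) * ∫ t in Set.Ioi r, f t : ℝ) : ℂ) r) ∧
    (IntegrableOn f (Set.Ioi 0) → (∫ t in Set.Ioi (0:ℝ), f t) = 0 →
      Tendsto (fun r => deriv (qOne κ₀ c f) r) (nhdsWithin 0 (Set.Ioi 0)) (nhds 0)) := by
  have hderiv : ∀ r, 0 < r → HasDerivAt (qOne κ₀ c f) ((-(1 / κ₀) * ∫ t in Ioi r, f t : ℝ) : ℂ) r :=
    fun r hr => hasDerivAt_qOne hc.1 (by linarith [hc.2]) hf hint hmel hr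
  refine ⟨hderiv, fun hfint hzero => ?_⟩
  have htail : ContinuousWithinAt (fun r => ((-(1 / κ₀) * ∫ t in Ioi r, f t : ℝ) : ℂ)) (Ioi 0) 0 :=
    (continuous_ofReal.continuousAt.comp_continuousWithinAt
      ((hfint.continuousOn_Ici_primitive_Ioi 0 self_mem_Ici).const_smul (-(1 / κ₀)))).mono
      Ioi_subset_Ici_self
  have hlim := htail.tendsto
  rw [hzero, mul_zero, ofReal_zero] at hlim
  exact hlim.congr' (eventually_nhdsWithin_of_forall fun r hr => (hderiv r hr).deriv.symm)

/-- let `κ₀ > 0`, `c ∈ (-1,-1/2)`, and let `f : (0,∞) → ℝ` be continuous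
with `∫₀^∞ t^{c+1}|f(t)| dt < ∞` and with Mellin transform `f̃(s) = ∫₀^∞ r^{s-1}f(r) dr`
absolutely integrable over the line `{Re λ = c}` as a function of `λ ↦ f̃(λ+2)`.  Then
`q₁(r) = (1/(2πi)) ∫_{Re λ=c} r^{-λ} f̃(λ+2)/(κ₀ λ (λ+1)) dλ` is differentiable on
`(0,∞)` with `q₁′(r) = -(1/κ₀) ∫_r^∞ f(t) dt` for every `r > 0`; in particular, if
`∫₀^∞ f(t) dt = 0` (and this integral converges), then `lim_{r→0⁺} q₁′(r) = 0`. -/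
theorem stmt15 (κ₀ c : ℝ) (hκ₀ : 0 < κ₀) (hc : c ∈ Set.Ioo (-1 : ℝ) (-1/2))
    (f : ℝ → ℝ) (hf : ContinuousOn f (Set.Ioi 0))
    (hint : IntegrableOn (fun t : ℝ => t ^ (c + 1) * |f t|) (Set.Ioi 0))
    (hmel : Integrable (fun τ : ℝ =>
      mellin (fun t => (f t : ℂ)) ((c : ℂ) + (τ : ℂ) * Complex.I + 2))) :
    (∀ r : ℝ, 0 < r →
      HasDerivAt (qOne κ₀ c f) ((-(1/κ₀) * ∫ t in Set.Ioi r, f t : ℝ) : ℂ) r) ∧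
    (IntegrableOn f (Set.Ioi 0) → (∫ t in Set.Ioi (0:ℝ), f t) = 0 →
      Tendsto (fun r => deriv (qOne κ₀ c f) r) (nhdsWithin 0 (Set.Ioi 0)) (nhds 0)) :=
  stmt15_general κ₀ c hc f hf hint hmel
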